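/- Let ρ̂, σ̂, ρ₃, σ₃ ∈ ℝ and κ̂ ∈ ℝ \ {0}, and set R̂(t) = ρ̂t² + t + σ̂. Define Natanzon parameters a = ρ̂/κ̂, c₀ = σ̂/κ̂, c₁ = (1+ρ̂+σ̂)/κ̂, f = −ρ₃, h₀ = −σ₃, h₁ = −(ρ₃+σ₃), and H(t) = at² + (c₁−c₀−a)t + c₀, Δ = (a−c₀−c₁)² − 4c₀c₁. Then H(t) = R̂(t)/κ̂ for all t, and for every real y with y ∉ {0,1} and R̂(y) ≠ 0: (y²(1−y)²/H(y)²)·[ a + (a+(c₁−c₀)(2y−1))/(y(y−1)) − (5/4)·Δ/H(y) ] + (f·y(y−1) + h₀(1−y) + h₁y + 1)/H(y) = (κ̂·y²(1−y)²/R̂(y))·[ 1/(y²(1−y)²) + 2ρ̂/R̂(y) + (1−2y)(2ρ̂y+1)/(y(1−y)R̂(y)) − 5(2ρ̂y+1)²/(4R̂(y)²) ] − κ̂·(ρ₃y² + σ₃)/R̂(y). -/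

import Mathlib

/-!
Scaling `(a, c₀, c₁)` by `1/κ̂` scales `H` by `1/κ̂` and `Δ` by `1/κ̂²`, hence multiplies
Natanzon's potential by `κ̂`, while `V_III` is linear in `κ̂`; so it suffices to take `κ̂ = 1`.
There `H = R̂` and `Δ = 1 - 4ρ̂σ̂` is the discriminant of `R̂`, and the Schwarzian parts of the
two potentials agree because `R̂'² = 4ρ̂R̂ + Δ`: after that substitution the identity holds
with `R̂(y)` treated as an indeterminate.
-/

/-- Natanzon's quadratic `H(t) = at² + (c₁−c₀−a)t + c₀`. -/
def natanzonH (a c₀ c₁ : ℝ) : ℝ → ℝ := fun t => a * t ^ 2 + (c₁ - c₀ - a) * t + c₀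

/-- Iwata's third quadratic `R̂(t) = ρ̂t² + t + σ̂`. -/
def iwataR3 (ρh σh : ℝ) : ℝ → ℝ := fun t => ρh * t ^ 2 + t + σh

/-- `(a - c₀ - c₁) ^ 2 - 4 * c₀ * c₁` is the discriminant `Δ` of `H`. -/
noncomputable def natanzonPotential (a c₀ c₁ f h₀ h₁ y : ℝ) : ℝ :=
  (y ^ 2 * (1 - y) ^ 2 / (natanzonH a c₀ c₁ y) ^ 2) *
      (a + (a + (c₁ - c₀) * (2 * y - 1)) / (y * (y - 1))
        - (5 / 4) * ((a - c₀ - c₁) ^ 2 - 4 * c₀ * c₁) / natanzonH a c₀ c₁ y)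
    + (f * y * (y - 1) + h₀ * (1 - y) + h₁ * y + 1) / natanzonH a c₀ c₁ y

noncomputable def iwataV3 (ρh σh ρ₃ σ₃ κh y : ℝ) : ℝ :=
  (κh * y ^ 2 * (1 - y) ^ 2 / iwataR3 ρh σh y) *
      (1 / (y ^ 2 * (1 - y) ^ 2) + 2 * ρh / iwataR3 ρh σh y
        + (1 - 2 * y) * (2 * ρh * y + 1) / (y * (1 - y) * iwataR3 ρh σh y)
        - 5 * (2 * ρh * y + 1) ^ 2 / (4 * (iwataR3 ρh σh y) ^ 2))
    - κh * (ρ₃ * y ^ 2 + σ₃) / iwataR3 ρh σh y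

theorem natanzonH_div (a c₀ c₁ κ t : ℝ) :
    natanzonH (a / κ) (c₀ / κ) (c₁ / κ) t = natanzonH a c₀ c₁ t / κ := by
  simp only [natanzonH]
  ring

theorem natanzonH_eq_iwataR3 (ρh σh : ℝ) : natanzonH ρh σh (1 + ρh + σh) = iwataR3 ρh σh := by
  funext t
  simp only [natanzonH, iwataR3]
  ring

theorem natanzonPotential_div {κ : ℝ} (hκ : κ ≠ 0) (a c₀ c₁ f h₀ h₁ y : ℝ) :
    natanzonPotential (a / κ) (c₀ / κ) (c₁ / κ) f h₀ h₁ y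
      = κ * natanzonPotential a c₀ c₁ f h₀ h₁ y := by
  simp only [natanzonPotential, natanzonH_div]
  field_simp

theorem iwataV3_eq_mul (ρh σh ρ₃ σ₃ κh y : ℝ) :
    iwataV3 ρh σh ρ₃ σ₃ κh y = κh * iwataV3 ρh σh ρ₃ σ₃ 1 y := by
  simp only [iwataV3]
  ring

theorem sq_deriv_iwataR3 (ρh σh t : ℝ) :
    (2 * ρh * t + 1) ^ 2 = 4 * ρh * iwataR3 ρh σh t + (1 - 4 * ρh * σh) := by
  simp only [iwataR3]
  ring

theorem natanzonPotential_eq_iwataV3 {ρh σh y : ℝ} (ρ₃ σ₃ : ℝ) (hy₀ : y ≠ 0) (hy₁ : y ≠ 1)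
    (hR : iwataR3 ρh σh y ≠ 0) :
    natanzonPotential ρh σh (1 + ρh + σh) (-ρ₃) (-σ₃) (-(ρ₃ + σ₃)) y = iwataV3 ρh σh ρ₃ σ₃ 1 y := by
  have hΔ : (ρh - σh - (1 + ρh + σh)) ^ 2 - 4 * σh * (1 + ρh + σh) = 1 - 4 * ρh * σh := by ring
  simp only [natanzonPotential, iwataV3, natanzonH_eq_iwataR3, hΔ]
  rw [sq_deriv_iwataR3 ρh σh y]
  field_simp
  ring

theorem stmt_10 (ρh σh ρ₃ σ₃ κh : ℝ) (hκ : κh ≠ 0)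
    (a c₀ c₁ f h₀ h₁ : ℝ)
    (ha : a = ρh / κh) (hc₀ : c₀ = σh / κh) (hc₁ : c₁ = (1 + ρh + σh) / κh)
    (hf : f = -ρ₃) (hh₀ : h₀ = -σ₃) (hh₁ : h₁ = -(ρ₃ + σ₃)) :
    (∀ t : ℝ, natanzonH a c₀ c₁ t = iwataR3 ρh σh t / κh) ∧
    ∀ y : ℝ, y ≠ 0 → y ≠ 1 → iwataR3 ρh σh y ≠ 0 →
      (y ^ 2 * (1 - y) ^ 2 / (natanzonH a c₀ c₁ y) ^ 2) *
            (a + (a + (c₁ - c₀) * (2 * y - 1)) / (y * (y - 1))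
              - (5 / 4) * ((a - c₀ - c₁) ^ 2 - 4 * c₀ * c₁) / natanzonH a c₀ c₁ y)
          + (f * y * (y - 1) + h₀ * (1 - y) + h₁ * y + 1) / natanzonH a c₀ c₁ y
        = (κh * y ^ 2 * (1 - y) ^ 2 / iwataR3 ρh σh y) *
            (1 / (y ^ 2 * (1 - y) ^ 2) + 2 * ρh / iwataR3 ρh σh y
              + (1 - 2 * y) * (2 * ρh * y + 1) / (y * (1 - y) * iwataR3 ρh σh y)
              - 5 * (2 * ρh * y + 1) ^ 2 / (4 * (iwataR3 ρh σh y) ^ 2))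
          - κh * (ρ₃ * y ^ 2 + σ₃) / iwataR3 ρh σh y := by
  subst ha hc₀ hc₁ hf hh₀ hh₁
  refine ⟨fun t => by rw [natanzonH_div, natanzonH_eq_iwataR3], fun y hy₀ hy₁ hR => ?_⟩
  change natanzonPotential _ _ _ _ _ _ y = iwataV3 ρh σh ρ₃ σ₃ κh y
  rw [natanzonPotential_div hκ, natanzonPotential_eq_iwataV3 ρ₃ σ₃ hy₀ hy₁ hR,
    iwataV3_eq_mul ρh σh ρ₃ σ₃ κh]
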